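/- Let A be an Artin algebra and let 0 → M_n → M_{n-1} → ⋯ → M₀ → X → 0 be an exact sequence of finitely generated A-modules. Then X ∈ [⊕_{i=0}^n Ω^{-i}(M_i)]_{n+1}, where Ω^{-i} denotes the i-th cosyzygy. -/

import Mathlib

open CategoryTheory

universe u

namespace Paper

variable (A : Type u) [Ring A]

/-- A short exact sequence `0 → X → Y → Z → 0` of `A`-modules. -/
def SES (X Y Z : ModuleCat.{u} A) : Prop :=
  ∃ (f : X →ₗ[A] Y) (g : Y →ₗ[A] Z),
    Function.Injective f ∧ Function.Surjective g ∧ LinearMap.range f = LinearMap.ker g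

/-- `M` is a direct summand of `X`. -/
def IsSummand (M X : ModuleCat.{u} A) : Prop :=
  ∃ (i : M →ₗ[A] X) (r : X →ₗ[A] M), r.comp i = LinearMap.id

/-- The additive closure `add 𝒯`: direct summands of finite direct sums of objects of `𝒯`. -/
def addClosure (T : Set (ModuleCat.{u} A)) : Set (ModuleCat.{u} A) :=
  { M | ∃ (n : ℕ) (f : Fin n → ModuleCat.{u} A), (∀ j, f j ∈ T) ∧
      IsSummand A M (ModuleCat.of A (∀ j, (f j : Type u))) }

/-- The extension product `𝒞 • 𝒟`: (summands of) extensions of a module of `𝒟`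
by a module of `𝒞`. -/
def bullet (C D : Set (ModuleCat.{u} A)) : Set (ModuleCat.{u} A) :=
  addClosure A { X | ∃ C' ∈ C, ∃ D' ∈ D, SES A C' X D' }

/-- `[𝒯]ₙ`, defined by `[𝒯]₀ = {0}`, `[𝒯]₁ = add 𝒯` and `[𝒯]ₙ = [𝒯]₁ • [𝒯]ₙ₋₁`. -/
def bracket (T : Set (ModuleCat.{u} A)) : ℕ → Set (ModuleCat.{u} A)
  | 0 => { M | ∀ x : M, x = 0 }
  | 1 => addClosure A T
  | n + 2 => bullet A (addClosure A T) (bracket T (n + 1))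

/-- The class `𝒯₁ ⊕ 𝒯₂ = {X ⊕ Y | X ∈ 𝒯₁, Y ∈ 𝒯₂}`. -/
def setSum (T1 T2 : Set (ModuleCat.{u} A)) : Set (ModuleCat.{u} A) :=
  { M | ∃ X ∈ T1, ∃ Y ∈ T2, Nonempty ((M : Type u) ≃ₗ[A] (↥X × ↥Y)) }

/-- The extension dimension of a subcategory `𝒞` of `A`-mod:
the least `n` such that `𝒞 ⊆ [T]_{n+1}` for some finitely generated module `T`. -/
noncomputable def ed (C : Set (ModuleCat.{u} A)) : ℕ∞ :=
  sInf { n : ℕ∞ | ∃ m : ℕ, n = (m : ℕ∞) ∧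
    ∃ T : ModuleCat.{u} A, Module.Finite A T ∧ C ⊆ bracket A {T} (m + 1) }

/-- The category `Ωⁿ(A-mod)` of `n`-th syzygy modules: finitely generated `K` admitting
an exact sequence `0 → K → P⁰ → ⋯ → P^{n-1} → M → 0` with all `Pⁱ` projective,
encoded by a chain of short exact sequences. -/
def SyzCat (n : ℕ) : Set (ModuleCat.{u} A) :=
  { K | Module.Finite A K ∧
    ∃ (Ks : Fin (n + 1) → ModuleCat.{u} A) (P : Fin n → ModuleCat.{u} A),
      Ks 0 = K ∧ (∀ i, Module.Finite A (Ks i)) ∧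
      (∀ i, Module.Finite A (P i) ∧ Module.Projective A (P i)) ∧
      ∀ i : Fin n, SES A (Ks i.castSucc) (P i) (Ks i.succ) }

/-- The category `Ω^∞(A-mod)` of infinite syzygy modules: finitely generated `K` admitting
an exact sequence `0 → K → P⁰ → P¹ → ⋯` with all `Pⁱ` projective. -/
def InfSyzCat : Set (ModuleCat.{u} A) :=
  { K | Module.Finite A K ∧
    ∃ Ks P : ℕ → ModuleCat.{u} A,
      Ks 0 = K ∧ (∀ i, Module.Finite A (Ks i)) ∧
      (∀ i, Module.Finite A (P i) ∧ Module.Projective A (P i)) ∧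
      ∀ i : ℕ, SES A (Ks i) (P i) (Ks (i + 1)) }

/-- A submodule is superfluous (small). -/
def Superfluous {M : ModuleCat.{u} A} (N : Submodule A M) : Prop :=
  ∀ N' : Submodule A M, N ⊔ N' = ⊤ → N' = ⊤

/-- `K` is the (minimal) syzygy `Ω(M)`: the kernel of a projective cover `P → M`. -/
def IsSyzygyOf (K M : ModuleCat.{u} A) : Prop :=
  ∃ (P : ModuleCat.{u} A) (i : K →ₗ[A] P) (p : P →ₗ[A] M),
    Module.Projective A P ∧ Function.Injective i ∧ Function.Surjective p ∧
    LinearMap.range i = LinearMap.ker p ∧ Superfluous A (LinearMap.ker p)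

/-- `K ≅ Ωⁿ(M)`. -/
def IsIterSyzygyOf : ℕ → ModuleCat.{u} A → ModuleCat.{u} A → Prop
  | 0, K, M => Nonempty ((K : Type u) ≃ₗ[A] M)
  | n + 1, K, M => ∃ L, IsIterSyzygyOf n L M ∧ IsSyzygyOf A K L

/-- A submodule is essential. -/
def EssentialIn {M : ModuleCat.{u} A} (N : Submodule A M) : Prop :=
  ∀ N' : Submodule A M, N ⊓ N' = ⊥ → N' = ⊥

/-- `C` is the cosyzygy `Ω⁻¹(M)`: the cokernel of an injective envelope `M → I`. -/
def IsCosyzygyOf (C M : ModuleCat.{u} A) : Prop :=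
  ∃ (I : ModuleCat.{u} A) (j : M →ₗ[A] I) (q : I →ₗ[A] C),
    Module.Injective A I ∧ Function.Injective j ∧ Function.Surjective q ∧
    LinearMap.range j = LinearMap.ker q ∧ EssentialIn A (LinearMap.range j)

/-- `C ≅ Ω⁻ⁿ(M)`. -/
def IsIterCosyzygyOf : ℕ → ModuleCat.{u} A → ModuleCat.{u} A → Prop
  | 0, C, M => Nonempty ((C : Type u) ≃ₗ[A] M)
  | n + 1, C, M => ∃ L, IsIterCosyzygyOf n L M ∧ IsCosyzygyOf A C L

/-- An exact sequence `0 → M n → M (n-1) → ⋯ → M 0 → X → 0`, encoded by splicing: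
there are modules `K i` with `K 0 = X`, `K (n+1) = 0` and short exact sequences
`0 → K (i+1) → M i → K i → 0`. -/
def LongExact (n : ℕ) (M : Fin (n + 1) → ModuleCat.{u} A) (X : ModuleCat.{u} A) : Prop :=
  ∃ K : Fin (n + 2) → ModuleCat.{u} A,
    K 0 = X ∧ (∀ x : (K (Fin.last (n + 1)) : Type u), x = 0) ∧
    ∀ i : Fin (n + 1), SES A (K i.succ) (M i) (K i.castSucc)

/-!
Cosyzygies exist and are unique up to isomorphism over any ring, because injective envelopes do.
A short exact sequence `0 → U → V → W → 0` pushed out along the injective envelope of `U` gives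
`0 → V → W ⊕ I → Ω⁻¹U → 0`, and applying the horseshoe lemma `a` times to it gives
`0 → Ω⁻ᵃV → Ω⁻ᵃW ⊕ J → Ω⁻⁽ᵃ⁺¹⁾U → 0` with `J` injective. For the pieces
`0 → Kᵢ₊₁ → Mᵢ → Kᵢ → 0` of the long exact sequence and `a = i`, this makes `Ω⁻ⁱKᵢ` a summand of
an extension of `Ω⁻⁽ⁱ⁺¹⁾Kᵢ₊₁` by `Ω⁻ⁱMᵢ`, so downward induction on `i` gives
`Ω⁻ⁱKᵢ ∈ [T]ₙ₊₁₋ᵢ`, where `T = ⊕ᵢ Ω⁻ⁱMᵢ` and `Ω⁻⁽ⁿ⁺¹⁾Kₙ₊₁ = 0`.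
-/

section Cosyzygy

variable {A}

theorem _root_.Module.Injective.of_retraction {Q M : Type u} [AddCommGroup Q] [Module A Q]
    [AddCommGroup M] [Module A M] (hQ : Module.Injective A Q) (i : M →ₗ[A] Q) (r : Q →ₗ[A] M)
    (hri : ∀ m, r (i m) = m) : Module.Injective A M where
  out X Y _ _ _ _ f hf g := by
    obtain ⟨h, hh⟩ := hQ.out f hf (i.comp g)
    exact ⟨r.comp h, fun x => by simp [hh, hri]⟩

theorem _root_.Module.Injective.of_linearEquiv {Q M : Type u} [AddCommGroup Q] [Module A Q]
    [AddCommGroup M] [Module A M] (hQ : Module.Injective A Q) (e : Q ≃ₗ[A] M) :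
    Module.Injective A M :=
  hQ.of_retraction e.symm.toLinearMap e.toLinearMap e.apply_symm_apply

theorem _root_.Module.Injective.prod {I J : Type u} [AddCommGroup I] [Module A I]
    [AddCommGroup J] [Module A J] (hI : Module.Injective A I) (hJ : Module.Injective A J) :
    Module.Injective A (I × J) where
  out X Y _ _ _ _ f hf g := by
    obtain ⟨h₁, hh₁⟩ := hI.out f hf ((LinearMap.fst A I J).comp g)
    obtain ⟨h₂, hh₂⟩ := hJ.out f hf ((LinearMap.snd A I J).comp g)
    exact ⟨h₁.prod h₂, fun x => Prod.ext (hh₁ x) (hh₂ x)⟩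

theorem _root_.Module.Injective.exists_retraction {Q : Type u} [AddCommGroup Q] [Module A Q]
    {N : Submodule A Q} (hN : Module.Injective A N) : ∃ r : Q →ₗ[A] N, ∀ n : N, r n = n := by
  obtain ⟨r, hr⟩ := hN.out N.subtype Subtype.coe_injective LinearMap.id
  exact ⟨r, hr⟩

theorem nonempty_linearEquiv_of_ker_eq {I D E : Type u} [AddCommGroup I] [Module A I]
    [AddCommGroup D] [Module A D] [AddCommGroup E] [Module A E]
    (q : I →ₗ[A] D) (hq : Function.Surjective q) (φ : I →ₗ[A] E) (hφ : Function.Surjective φ)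
    (h : LinearMap.ker q = LinearMap.ker φ) : Nonempty (D ≃ₗ[A] E) :=
  ⟨(q.quotKerEquivOfSurjective hq).symm ≪≫ₗ Submodule.quotEquivOfEq _ _ h ≪≫ₗ
    φ.quotKerEquivOfSurjective hφ⟩

theorem essentialIn_iff {X : ModuleCat.{u} A} (N : Submodule A X) :
    EssentialIn A N ↔ ∀ x : X, x ≠ 0 → ∃ a : A, a • x ∈ N ∧ a • x ≠ 0 := by
  constructor
  · intro h x hx
    by_contra! hc
    have hdisj : N ⊓ Submodule.span A {x} = ⊥ := by
      refine (Submodule.eq_bot_iff _).mpr fun y ⟨hyN, hy⟩ => ?_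
      obtain ⟨a, rfl⟩ := Submodule.mem_span_singleton.mp hy
      exact hc a hyN
    have hx' : x ∈ Submodule.span A {x} := Submodule.mem_span_singleton_self x
    rw [h _ hdisj, Submodule.mem_bot] at hx'
    exact hx hx'
  · intro h N' hN'
    refine (Submodule.eq_bot_iff _).mpr fun y hy => ?_
    by_contra hy0
    obtain ⟨a, haN, ha0⟩ := h y hy0
    have hmem : a • y ∈ N ⊓ N' := ⟨haN, N'.smul_mem a hy⟩
    rw [hN', Submodule.mem_bot] at hmem
    exact ha0 hmem

def EssentialOver {Q : Type u} [AddCommGroup Q] [Module A Q] (N₀ N : Submodule A Q) : Prop :=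
  ∀ x ∈ N, x ≠ 0 → ∃ a : A, a • x ∈ N₀ ∧ a • x ≠ 0

section Hull

variable {Q : Type u} [AddCommGroup Q] [Module A Q]

theorem exists_maximal_essentialOver (N₀ : Submodule A Q) :
    ∃ N, Maximal (fun N => N₀ ≤ N ∧ EssentialOver N₀ N) N := by
  obtain ⟨N, -, hN⟩ := zorn_le_nonempty₀ {N | N₀ ≤ N ∧ EssentialOver N₀ N}
    (fun c hc hchain y hy => by
      refine ⟨sSup c, ⟨(hc hy).1.trans (le_sSup hy), fun x hx hx0 => ?_⟩,
        fun z hz => le_sSup hz⟩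
      obtain ⟨p, hp, hxp⟩ := (Submodule.mem_sSup_of_directed ⟨y, hy⟩ hchain.directedOn).mp hx
      exact (hc hp).2 x hxp hx0)
    N₀ ⟨le_rfl, fun x hx hx0 => ⟨1, by simpa using hx, by simpa using hx0⟩⟩
  exact ⟨N, hN⟩

theorem exists_maximal_disjoint (N : Submodule A Q) : ∃ N', Maximal (Disjoint N) N' := by
  obtain ⟨N', -, hN'⟩ := zorn_le_nonempty₀ {N' | Disjoint N N'}
    (fun c hc hchain y hy => ⟨sSup c, hchain.directedOn.disjoint_sSup_right.mpr hc,
      fun z hz => le_sSup hz⟩) ⊥ disjoint_bot_right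
  exact ⟨N', hN'⟩

/-- A maximal complement `N'` of `N` makes the image of `N` in `Q ⧸ N'` essential. -/
theorem exists_smul_sub_mem_of_maximal_disjoint {N N' : Submodule A Q}
    (hN' : Maximal (Disjoint N) N') {x : Q} (hx : x ∉ N') :
    ∃ (a : A) (m : Q), m ∈ N ∧ m ≠ 0 ∧ a • x - m ∈ N' := by
  have hlt : N' < N' ⊔ Submodule.span A {x} :=
    lt_of_le_of_ne le_sup_left fun h =>
      hx (h ▸ Submodule.mem_sup_right (Submodule.mem_span_singleton_self x))
  obtain ⟨m, ⟨hmN, hm⟩, hm0⟩ := Submodule.ne_bot_iff _ |>.mp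
    (disjoint_iff.not.mp fun h => hN'.not_gt h hlt)
  obtain ⟨n', hn', s, hs, rfl⟩ := Submodule.mem_sup.mp hm
  obtain ⟨a, rfl⟩ := Submodule.mem_span_singleton.mp hs
  exact ⟨a, n' + a • x, hmN, hm0, by simpa using neg_mem hn'⟩

/-- `N` is the image of an extension `Q ⧸ N' → Q` of `N ↪ Q`, where `N'` is a maximal complement
of `N`, hence a retract of `Q`. -/
theorem injective_of_maximal_essentialOver (hQ : Module.Injective A Q) {N₀ N : Submodule A Q}
    (hN : Maximal (fun N => N₀ ≤ N ∧ EssentialOver N₀ N) N) : Module.Injective A N := by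
  obtain ⟨N', hN'⟩ := exists_maximal_disjoint N
  have hinj : Function.Injective (N'.mkQ ∘ₗ N.subtype) := by
    rw [← LinearMap.ker_eq_bot, LinearMap.ker_comp, Submodule.ker_mkQ, eq_bot_iff]
    intro m hm
    exact (Submodule.mem_bot A).mpr (Subtype.ext (Submodule.disjoint_def.mp hN'.prop _ m.2 hm))
  obtain ⟨h, hh⟩ := hQ.out _ hinj N.subtype
  have hh' : ∀ m ∈ N, h (N'.mkQ m) = m := fun m hm => hh ⟨m, hm⟩
  have hNh : N ≤ LinearMap.range h := fun m hm => ⟨N'.mkQ m, hh' m hm⟩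
  have hess : EssentialOver N₀ (LinearMap.range h) := by
    rintro _ ⟨z, rfl⟩ hz0
    obtain ⟨x, rfl⟩ := N'.mkQ_surjective z
    have hx : x ∉ N' := fun hx => hz0 (by simp [(Submodule.Quotient.mk_eq_zero N').mpr hx])
    obtain ⟨a, m, hmN, hm0, hm⟩ := exists_smul_sub_mem_of_maximal_disjoint hN' hx
    have hax : a • h (N'.mkQ x) = m := by
      rw [← map_smul, ← hh' m hmN, ← sub_eq_zero, ← map_sub, ← map_smul, ← map_sub,
        Submodule.mkQ_apply, (Submodule.Quotient.mk_eq_zero N').mpr hm, map_zero]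
    obtain ⟨b, hb, hb0⟩ := hN.prop.2 m hmN hm0
    exact ⟨b * a, by rwa [mul_smul, hax], by rwa [mul_smul, hax]⟩
  have hrange : LinearMap.range h = N := le_antisymm (hN.2 ⟨hN.prop.1.trans hNh, hess⟩ hNh) hNh
  exact hQ.of_retraction N.subtype
    (LinearMap.codRestrict N h (fun z => hrange ▸ LinearMap.mem_range_self h z) ∘ₗ N'.mkQ)
    (fun m => Subtype.ext (hh' m m.2))

theorem exists_injective_essentialOver (hQ : Module.Injective A Q) (N₀ : Submodule A Q) :
    ∃ N : Submodule A Q, N₀ ≤ N ∧ Module.Injective A N ∧ EssentialOver N₀ N := by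
  obtain ⟨N, hN⟩ := exists_maximal_essentialOver N₀
  exact ⟨N, hN.prop.1, injective_of_maximal_essentialOver hQ hN, hN.prop.2⟩

end Hull

section Retraction

variable {I : Type u} [AddCommGroup I] [Module A I] {N : Submodule A I} {r : I →ₗ[A] N}

def projKer (hr : ∀ n : N, r n = n) : I →ₗ[A] LinearMap.ker r :=
  LinearMap.codRestrict _ (LinearMap.id - N.subtype ∘ₗ r) fun x => by simp [hr]

theorem coe_projKer (hr : ∀ n : N, r n = n) (x : I) : (projKer hr x : I) = x - r x := rfl

theorem _root_.Module.Injective.ker_retraction (hI : Module.Injective A I)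
    (hr : ∀ n : N, r n = n) : Module.Injective A (LinearMap.ker r) :=
  hI.of_retraction (LinearMap.ker r).subtype (projKer hr) fun k => Subtype.ext <| by
    rw [coe_projKer, Submodule.subtype_apply, LinearMap.mem_ker.mp k.2, ZeroMemClass.coe_zero,
      sub_zero]

theorem nonempty_quotient_linearEquiv_prod (hr : ∀ n : N, r n = n) (L : Submodule A N) :
    Nonempty ((I ⧸ L.map N.subtype) ≃ₗ[A] (N ⧸ L) × LinearMap.ker r) := by
  let φ : I →ₗ[A] (N ⧸ L) × LinearMap.ker r := (L.mkQ ∘ₗ r).prod (projKer hr)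
  have hφ_apply : ∀ x, φ x = (L.mkQ (r x), projKer hr x) := fun x => rfl
  have hφ : Function.Surjective φ := by
    rintro ⟨z, k⟩
    obtain ⟨n, rfl⟩ := L.mkQ_surjective z
    have hrx : r (n + k) = n := by rw [map_add, hr n, k.2, add_zero]
    refine ⟨n + k, Prod.ext (by rw [hφ_apply, hrx]) (Subtype.ext ?_)⟩
    rw [hφ_apply, coe_projKer, hrx, add_sub_cancel_left]
  refine nonempty_linearEquiv_of_ker_eq _ (Submodule.mkQ_surjective _) φ hφ ?_
  ext x
  rw [Submodule.ker_mkQ, LinearMap.mem_ker, hφ_apply, Prod.mk_eq_zero, Submodule.mkQ_apply,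
    Submodule.Quotient.mk_eq_zero, ← Subtype.val_inj, coe_projKer, ZeroMemClass.coe_zero,
    sub_eq_zero]
  constructor
  · rintro ⟨y, hy, rfl⟩
    rw [Submodule.subtype_apply, hr y]
    exact ⟨hy, rfl⟩
  · rintro ⟨hx, hxr⟩
    exact ⟨r x, hx, hxr.symm⟩

end Retraction

/-- `J` is a complement, inside `I`, of an injective hull of `U`. -/
theorem exists_isCosyzygyOf_prod_of_injective {I U D : ModuleCat.{u} A}
    (hI : Module.Injective A I) (u : U →ₗ[A] I) (hu : Function.Injective u) (q : I →ₗ[A] D)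
    (hq : Function.Surjective q) (hker : LinearMap.ker q = LinearMap.range u) :
    ∃ C J : ModuleCat.{u} A, IsCosyzygyOf A C U ∧ Module.Injective A J ∧
      Nonempty (D ≃ₗ[A] C × J) := by
  obtain ⟨N, hle, hN, hess⟩ := exists_injective_essentialOver hI (LinearMap.range u)
  obtain ⟨r, hr⟩ := hN.exists_retraction
  let u' : U →ₗ[A] N := LinearMap.codRestrict N u fun v => hle ⟨v, rfl⟩
  have hu' : (LinearMap.range u').map N.subtype = LinearMap.range u := by
    rw [← LinearMap.range_comp, LinearMap.subtype_comp_codRestrict]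
  obtain ⟨e₁⟩ := nonempty_linearEquiv_of_ker_eq q hq _ (Submodule.mkQ_surjective _)
    (hker.trans (hu'.symm.trans (Submodule.ker_mkQ _).symm))
  obtain ⟨e₂⟩ := nonempty_quotient_linearEquiv_prod hr (LinearMap.range u')
  refine ⟨ModuleCat.of A (N ⧸ LinearMap.range u'), ModuleCat.of A (LinearMap.ker r),
    ⟨ModuleCat.of A N, u', Submodule.mkQ _, hN, fun v w h => hu (congrArg Subtype.val h),
      Submodule.mkQ_surjective _, (Submodule.ker_mkQ _).symm, ?_⟩, hI.ker_retraction hr,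
    ⟨e₁ ≪≫ₗ e₂⟩⟩
  rw [essentialIn_iff]
  intro x hx
  obtain ⟨a, ⟨v, hv⟩, ha⟩ := hess x.1 x.2 (fun h => hx (Subtype.ext h))
  exact ⟨a, ⟨v, Subtype.ext hv⟩, fun h => ha (congrArg Subtype.val h)⟩

theorem exists_isCosyzygyOf (M : ModuleCat.{u} A) : ∃ C, IsCosyzygyOf A C M := by
  let I : ModuleCat.{u} A := CategoryTheory.Injective.under M
  let ι : M ⟶ I := CategoryTheory.Injective.ι M
  have : CategoryTheory.Injective (ModuleCat.of A I) := by
    rw [ModuleCat.of_coe]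
    exact CategoryTheory.Injective.injective_under M
  have hI : Module.Injective A I := Module.injective_module_of_injective_object A I
  have hι : Function.Injective ι.hom := (ModuleCat.mono_iff_injective ι).mp inferInstance
  obtain ⟨C, -, hC, -⟩ := exists_isCosyzygyOf_prod_of_injective
    (D := ModuleCat.of A (_ ⧸ LinearMap.range ι.hom)) hI _ hι
    (Submodule.mkQ _) (Submodule.mkQ_surjective _) (Submodule.ker_mkQ _)
  exact ⟨C, hC⟩

theorem IsCosyzygyOf.of_linearEquiv_left {C C' M : ModuleCat.{u} A} (h : IsCosyzygyOf A C M)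
    (e : C ≃ₗ[A] C') : IsCosyzygyOf A C' M := by
  obtain ⟨I, j, q, hI, hj, hq, hjq, hess⟩ := h
  refine ⟨I, j, e.toLinearMap ∘ₗ q, hI, hj, e.surjective.comp hq, ?_, hess⟩
  rw [LinearMap.ker_comp, e.ker, Submodule.comap_bot, hjq]

/-- An injective submodule is a direct summand, and its complement meets `L` trivially. -/
theorem EssentialIn.eq_top_of_le {M : ModuleCat.{u} A} {L N : Submodule A M}
    (hL : EssentialIn A L) (hLN : L ≤ N) (hN : Module.Injective A N) : N = ⊤ := by
  obtain ⟨r, hr⟩ := hN.exists_retraction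
  have hker : LinearMap.ker r = ⊥ := by
    refine hL _ ((Submodule.eq_bot_iff _).mpr fun x ⟨hxL, hx⟩ => ?_)
    have : (⟨x, hLN hxL⟩ : N) = 0 := (hr ⟨x, hLN hxL⟩).symm.trans hx
    exact congrArg Subtype.val this
  refine eq_top_iff.mpr fun y _ => ?_
  have hy : y - r y ∈ LinearMap.ker r := by simp [hr]
  rw [hker, Submodule.mem_bot, sub_eq_zero] at hy
  exact hy ▸ (r y).2

/-- An extension `I → I'` of `M ≃ M'` is injective by essentiality of `M` in `I`, and onto since
its injective image contains the essential submodule `M'`. -/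
theorem IsCosyzygyOf.nonempty_linearEquiv {C C' M M' : ModuleCat.{u} A} (h : IsCosyzygyOf A C M)
    (h' : IsCosyzygyOf A C' M') (e : M ≃ₗ[A] M') : Nonempty (C ≃ₗ[A] C') := by
  obtain ⟨I, j, q, hI, hj, hq, hjq, hess⟩ := h
  obtain ⟨I', j', q', hI', hj', hq', hjq', hess'⟩ := h'
  obtain ⟨f, hf⟩ := hI'.out j hj (j' ∘ₗ e.toLinearMap)
  have hf' : ∀ m, f (j m) = j' (e m) := hf
  have hfinj : Function.Injective f := by
    refine LinearMap.ker_eq_bot.mp (hess _ ((Submodule.eq_bot_iff _).mpr ?_))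
    rintro _ ⟨⟨m, rfl⟩, hm⟩
    replace hm : f (j m) = 0 := hm
    rw [hf', map_eq_zero_iff _ hj', map_eq_zero_iff _ e.injective] at hm
    rw [hm, map_zero]
  have hfsurj : Function.Surjective f := LinearMap.range_eq_top.mp <|
    hess'.eq_top_of_le (fun _ ⟨m', hm'⟩ => ⟨j (e.symm m'), by rw [hf', e.apply_symm_apply, hm']⟩)
      (hI.of_linearEquiv (LinearEquiv.ofInjective f hfinj))
  refine nonempty_linearEquiv_of_ker_eq q hq (q' ∘ₗ f) (hq'.comp hfsurj) ?_
  rw [LinearMap.ker_comp, ← hjq, ← hjq']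
  ext x
  constructor
  · rintro ⟨m, rfl⟩
    exact ⟨e m, (hf' m).symm⟩
  · rintro ⟨m', hm'⟩
    exact ⟨e.symm m', hfinj (by rw [hf', e.apply_symm_apply, hm'])⟩

theorem IsCosyzygyOf.prod_injective {C M J : ModuleCat.{u} A} (h : IsCosyzygyOf A C M)
    (hJ : Module.Injective A J) : IsCosyzygyOf A C (ModuleCat.of A (M × J)) := by
  obtain ⟨I, j, q, hI, hj, hq, hjq, hess⟩ := h
  refine ⟨ModuleCat.of A (I × J), j.prodMap LinearMap.id, q ∘ₗ LinearMap.fst A I J,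
    hI.prod hJ, hj.prodMap Function.injective_id, hq.comp Prod.fst_surjective, ?_, ?_⟩
  · rw [LinearMap.range_prodMap, LinearMap.range_id, LinearMap.ker_comp, ← hjq]
    ext
    simp
  · rw [essentialIn_iff] at hess ⊢
    rintro ⟨x, y⟩ hxy
    by_cases hx : x = 0
    · refine ⟨1, ⟨(0, y), by simp [hx]⟩, by simpa [hx] using hxy⟩
    · obtain ⟨a, ⟨m, hm⟩, ha⟩ := hess x hx
      exact ⟨a, ⟨(m, a • y), by simp [hm]⟩, fun h => ha (congrArg Prod.fst h)⟩

theorem IsCosyzygyOf.of_linearEquiv_prod {D E P J : ModuleCat.{u} A} (h : IsCosyzygyOf A D E)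
    (e : E ≃ₗ[A] P × J) (hJ : Module.Injective A J) : IsCosyzygyOf A D P := by
  obtain ⟨C, hC⟩ := exists_isCosyzygyOf P
  obtain ⟨eDC⟩ := h.nonempty_linearEquiv (hC.prod_injective hJ) e
  exact hC.of_linearEquiv_left eDC.symm

theorem IsCosyzygyOf.eq_zero {C M : ModuleCat.{u} A} (h : IsCosyzygyOf A C M)
    (hM : ∀ x : M, x = 0) : ∀ x : C, x = 0 := by
  obtain ⟨I, j, q, -, -, hq, -, hess⟩ := h
  have hj : LinearMap.range j = ⊥ := by
    rw [LinearMap.range_eq_bot]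
    exact LinearMap.ext fun x => by rw [hM x, map_zero, LinearMap.zero_apply]
  have htop : (⊤ : Submodule A I) = ⊥ := hess ⊤ (by rw [hj, bot_inf_eq])
  intro x
  obtain ⟨y, rfl⟩ := hq x
  rw [(Submodule.eq_bot_iff _).mp htop y Submodule.mem_top, map_zero]

theorem IsIterCosyzygyOf.eq_zero {C M : ModuleCat.{u} A} {k : ℕ} (h : IsIterCosyzygyOf A k C M)
    (hM : ∀ x : M, x = 0) : ∀ x : C, x = 0 := by
  induction k generalizing C with
  | zero =>
    obtain ⟨e⟩ := h
    exact fun x => e.injective (by rw [hM (e x), map_zero])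
  | succ k ih =>
    obtain ⟨L, hL, hC⟩ := h
    exact hC.eq_zero (ih hL)

theorem IsIterCosyzygyOf.nonempty_linearEquiv {C C' M M' : ModuleCat.{u} A} {k : ℕ}
    (h : IsIterCosyzygyOf A k C M) (h' : IsIterCosyzygyOf A k C' M') (e : M ≃ₗ[A] M') :
    Nonempty (C ≃ₗ[A] C') := by
  induction k generalizing C C' with
  | zero =>
    obtain ⟨e₁⟩ := h
    obtain ⟨e₂⟩ := h'
    exact ⟨e₁ ≪≫ₗ e ≪≫ₗ e₂.symm⟩
  | succ k ih =>
    obtain ⟨L, hL, hC⟩ := h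
    obtain ⟨L', hL', hC'⟩ := h'
    obtain ⟨eL⟩ := ih hL hL'
    exact hC.nonempty_linearEquiv hC' eL

section Pushout

variable {U V Y I : Type u} [AddCommGroup U] [Module A U] [AddCommGroup V] [Module A V]
  [AddCommGroup Y] [Module A Y] [AddCommGroup I] [Module A I]
  {f : U →ₗ[A] V} {g : V →ₗ[A] Y} {j : U →ₗ[A] I} {φ : V →ₗ[A] I}

theorem injective_prod_of_extension (hfg : LinearMap.ker g = LinearMap.range f)
    (hj : Function.Injective j) (hφ : ∀ x, φ (f x) = j x) : Function.Injective (g.prod φ) := by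
  refine (injective_iff_map_eq_zero _).mpr fun v hv => ?_
  obtain ⟨hgv, hφv⟩ := Prod.mk_eq_zero.mp hv
  obtain ⟨x, rfl⟩ : v ∈ LinearMap.range f := hfg ▸ hgv
  rw [hφ, map_eq_zero_iff _ hj] at hφv
  rw [hφv, map_zero]

theorem comap_inr_range_prod (hfg : LinearMap.ker g = LinearMap.range f)
    (hφ : ∀ x, φ (f x) = j x) :
    (LinearMap.range (g.prod φ)).comap (LinearMap.inr A Y I) = LinearMap.range j := by
  ext x
  constructor
  · rintro ⟨v, hv⟩
    obtain ⟨hgv, rfl⟩ := Prod.mk.inj hv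
    obtain ⟨u, rfl⟩ : v ∈ LinearMap.range f := hfg ▸ hgv
    exact ⟨u, (hφ u).symm⟩
  · rintro ⟨u, rfl⟩
    refine ⟨f u, Prod.ext ?_ (hφ u)⟩
    exact (LinearMap.mem_ker.mp (hfg ▸ LinearMap.mem_range_self f u : f u ∈ LinearMap.ker g))

theorem mk_prod_eq_mk_inr (v : V) (x : I) :
    (Submodule.Quotient.mk (g v, x) : (Y × I) ⧸ LinearMap.range (g.prod φ)) =
      Submodule.Quotient.mk (0, x - φ v) :=
  (Submodule.Quotient.eq _).mpr ⟨v, Prod.ext (by simp) (by simp)⟩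

end Pushout

/-- Pushout along an injective envelope of `U`. -/
theorem SES.exists_rotation {U V W : ModuleCat.{u} A} (h : SES A U V W) :
    ∃ Q I : ModuleCat.{u} A, SES A V (ModuleCat.of A (W × I)) Q ∧ Module.Injective A I ∧
      IsCosyzygyOf A Q U := by
  obtain ⟨f, g, hf, hg, hfg⟩ := h
  obtain ⟨-, I, j, -, hI, hj, -, -, hess⟩ := exists_isCosyzygyOf U
  obtain ⟨φ, hφ⟩ := hI.out f hf j
  let L := LinearMap.range (g.prod φ)
  refine ⟨ModuleCat.of A ((W × I) ⧸ L), I,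
    ⟨g.prod φ, L.mkQ, injective_prod_of_extension hfg.symm hj hφ, L.mkQ_surjective,
      (Submodule.ker_mkQ L).symm⟩, hI, I, j, L.mkQ ∘ₗ LinearMap.inr A W I, hI, hj, ?_, ?_, hess⟩
  · rintro z
    obtain ⟨⟨w, x⟩, rfl⟩ := L.mkQ_surjective z
    obtain ⟨v, rfl⟩ := hg w
    exact ⟨x - φ v, (mk_prod_eq_mk_inr v x).symm⟩
  · rw [LinearMap.ker_comp, Submodule.ker_mkQ, comap_inr_range_prod hfg.symm hφ]

theorem ses_quotient_range_prod {U V W IU IW : Type u} [AddCommGroup U] [Module A U]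
    [AddCommGroup V] [Module A V] [AddCommGroup W] [Module A W] [AddCommGroup IU] [Module A IU]
    [AddCommGroup IW] [Module A IW] {f : U →ₗ[A] V} {g : V →ₗ[A] W} {jU : U →ₗ[A] IU}
    {jW : W →ₗ[A] IW} {φ : V →ₗ[A] IU} (hg : Function.Surjective g)
    (hfg : LinearMap.ker (jW ∘ₗ g) = LinearMap.range f) (hφ : ∀ x, φ (f x) = jU x) :
    SES A (ModuleCat.of A (IU ⧸ LinearMap.range jU))
      (ModuleCat.of A ((IW × IU) ⧸ LinearMap.range ((jW ∘ₗ g).prod φ)))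
      (ModuleCat.of A (IW ⧸ LinearMap.range jW)) := by
  let L := LinearMap.range ((jW ∘ₗ g).prod φ)
  have hα : LinearMap.range jU = LinearMap.ker (L.mkQ ∘ₗ LinearMap.inr A IW IU) := by
    rw [LinearMap.ker_comp, Submodule.ker_mkQ, comap_inr_range_prod hfg hφ]
  refine ⟨(LinearMap.range jU).liftQ _ hα.le,
    L.mapQ (LinearMap.range jW) (LinearMap.fst A IW IU) (fun _ ⟨v, hv⟩ => ⟨g v, hv ▸ rfl⟩),
    LinearMap.ker_eq_bot.mp (Submodule.ker_liftQ_eq_bot' _ _ hα), fun z => ?_, ?_⟩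
  · obtain ⟨y, rfl⟩ := Submodule.mkQ_surjective _ z
    exact ⟨L.mkQ (y, 0), rfl⟩
  · ext z
    obtain ⟨⟨y, x⟩, rfl⟩ := L.mkQ_surjective z
    constructor
    · rintro ⟨x', hx'⟩
      obtain ⟨x', rfl⟩ := Submodule.mkQ_surjective _ x'
      rw [LinearMap.mem_ker, ← hx']
      exact (Submodule.Quotient.mk_eq_zero _).mpr (zero_mem _)
    · intro hz
      obtain ⟨w, rfl⟩ := (Submodule.Quotient.mk_eq_zero _).mp (LinearMap.mem_ker.mp hz)
      obtain ⟨v, rfl⟩ := hg w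
      exact ⟨Submodule.mkQ _ (x - φ v), (mk_prod_eq_mk_inr (g := jW ∘ₗ g) v x).symm⟩

/-- Horseshoe lemma, with injective envelopes at the ends. -/
theorem SES.exists_cosyzygy_ses {U V W : ModuleCat.{u} A} (h : SES A U V W) :
    ∃ U' E W' C J : ModuleCat.{u} A, SES A U' E W' ∧ IsCosyzygyOf A U' U ∧
      IsCosyzygyOf A W' W ∧ IsCosyzygyOf A C V ∧ Module.Injective A J ∧
      Nonempty (E ≃ₗ[A] C × J) := by
  obtain ⟨f, g, hf, hg, hfg⟩ := h
  obtain ⟨-, IU, jU, -, hIU, hjU, -, -, hessU⟩ := exists_isCosyzygyOf U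
  obtain ⟨-, IW, jW, -, hIW, hjW, -, -, hessW⟩ := exists_isCosyzygyOf W
  obtain ⟨φ, hφ⟩ := hIU.out f hf jU
  have hfg' : LinearMap.ker (jW ∘ₗ g) = LinearMap.range f := by
    rw [LinearMap.ker_comp, LinearMap.ker_eq_bot.mpr hjW, Submodule.comap_bot, hfg]
  let L := LinearMap.range ((jW ∘ₗ g).prod φ)
  obtain ⟨C, J, hC, hJ, hE⟩ := exists_isCosyzygyOf_prod_of_injective
    (I := ModuleCat.of A (IW × IU)) (D := ModuleCat.of A (_ ⧸ L)) (hIW.prod hIU) _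
    (injective_prod_of_extension hfg' hjU hφ) L.mkQ L.mkQ_surjective (Submodule.ker_mkQ L)
  exact ⟨_, _, _, C, J, ses_quotient_range_prod hg hfg' hφ,
    ⟨IU, jU, Submodule.mkQ _, hIU, hjU, Submodule.mkQ_surjective _, (Submodule.ker_mkQ _).symm,
      hessU⟩,
    ⟨IW, jW, Submodule.mkQ _, hIW, hjW, Submodule.mkQ_surjective _, (Submodule.ker_mkQ _).symm,
      hessW⟩, hC, hJ, hE⟩

theorem exists_isIterCosyzygyOf (k : ℕ) (M : ModuleCat.{u} A) : ∃ C, IsIterCosyzygyOf A k C M := by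
  induction k with
  | zero => exact ⟨M, ⟨LinearEquiv.refl A M⟩⟩
  | succ k ih =>
    obtain ⟨L, hL⟩ := ih
    obtain ⟨C, hC⟩ := exists_isCosyzygyOf L
    exact ⟨C, L, hL, hC⟩

theorem SES.exists_iterCosyzygy_rotation (a : ℕ) {U V W : ModuleCat.{u} A} (h : SES A U V W) :
    ∃ S E Q P J : ModuleCat.{u} A, SES A S E Q ∧ IsIterCosyzygyOf A a S V ∧
      Nonempty (E ≃ₗ[A] P × J) ∧ IsIterCosyzygyOf A a P W ∧ Module.Injective A J ∧
      IsIterCosyzygyOf A (a + 1) Q U := by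
  induction a with
  | zero =>
    obtain ⟨Q, I, hses, hI, hQ⟩ := h.exists_rotation
    exact ⟨V, _, Q, W, I, hses, ⟨LinearEquiv.refl A V⟩, ⟨LinearEquiv.refl A (W × I)⟩,
      ⟨LinearEquiv.refl A W⟩, hI, U, ⟨LinearEquiv.refl A U⟩, hQ⟩
  | succ a ih =>
    obtain ⟨S, E, Q, P, J, hses, hS, ⟨e⟩, hP, hJ, hQ⟩ := ih
    obtain ⟨S', E', Q', C, J', hses', hS', hQ', hC, hJ', hE'⟩ := hses.exists_cosyzygy_ses
    exact ⟨S', E', Q', C, J', hses', ⟨S, hS, hS'⟩, hE', ⟨P, hP, hC.of_linearEquiv_prod e hJ⟩,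
      hJ', ⟨Q, hQ, hQ'⟩⟩

end Cosyzygy

section Bracket

variable {A}

theorem isSummand_of_linearEquiv {M N : ModuleCat.{u} A} (e : M ≃ₗ[A] N) : IsSummand A M N :=
  ⟨e.toLinearMap, e.symm.toLinearMap, LinearMap.ext e.symm_apply_apply⟩

theorem isSummand_of_linearEquiv_prod {E P J : ModuleCat.{u} A} (e : E ≃ₗ[A] P × J) :
    IsSummand A P E :=
  ⟨e.symm.toLinearMap ∘ₗ LinearMap.inl A P J, LinearMap.fst A P J ∘ₗ e.toLinearMap,
    LinearMap.ext fun x => by simp⟩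

theorem IsSummand.trans {M N P : ModuleCat.{u} A} (h₁ : IsSummand A M N) (h₂ : IsSummand A N P) :
    IsSummand A M P := by
  obtain ⟨i₁, r₁, h₁⟩ := h₁
  obtain ⟨i₂, r₂, h₂⟩ := h₂
  refine ⟨i₂ ∘ₗ i₁, r₁ ∘ₗ r₂, ?_⟩
  rw [LinearMap.comp_assoc, ← LinearMap.comp_assoc i₁, h₂, LinearMap.id_comp, h₁]

theorem isSummand_pi {ι : Type} (C : ι → ModuleCat.{u} A) (i : ι) :
    IsSummand A (C i) (ModuleCat.of A (∀ j, C j)) := by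
  classical
  exact ⟨LinearMap.single A (fun j => C j) i, LinearMap.proj i,
    LinearMap.ext fun x => Pi.single_eq_same (M := fun j => C j) i x⟩

theorem mem_addClosure_of_mem {T : Set (ModuleCat.{u} A)} {X : ModuleCat.{u} A} (hX : X ∈ T) :
    X ∈ addClosure A T :=
  ⟨1, fun _ => X, fun _ => hX,
    isSummand_of_linearEquiv (LinearEquiv.funUnique (Fin 1) A X).symm⟩

theorem IsSummand.mem_addClosure {T : Set (ModuleCat.{u} A)} {M N : ModuleCat.{u} A}
    (h : IsSummand A M N) (hN : N ∈ addClosure A T) : M ∈ addClosure A T := by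
  obtain ⟨n, f, hf, hNf⟩ := hN
  exact ⟨n, f, hf, h.trans hNf⟩

theorem IsSummand.mem_bracket {T : Set (ModuleCat.{u} A)} {M N : ModuleCat.{u} A} {m : ℕ}
    (h : IsSummand A M N) (hN : N ∈ bracket A T m) : M ∈ bracket A T m := by
  match m with
  | 0 =>
    obtain ⟨i, r, hri⟩ := h
    intro x
    rw [← LinearMap.id_apply (R := A) x, ← hri, LinearMap.comp_apply, hN (i x), map_zero]
  | 1 => exact h.mem_addClosure hN
  | _ + 2 => exact h.mem_addClosure hN

theorem SES.nonempty_linearEquiv_of_eq_zero {S E Q : ModuleCat.{u} A} (h : SES A S E Q)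
    (hQ : ∀ x : Q, x = 0) : Nonempty (S ≃ₗ[A] E) := by
  obtain ⟨f, g, hf, -, hfg⟩ := h
  refine ⟨LinearEquiv.ofBijective f ⟨hf, fun y => ?_⟩⟩
  exact (hfg ▸ LinearMap.mem_ker.mpr (hQ (g y)) : y ∈ LinearMap.range f)

theorem SES.mem_bracket_succ {T : Set (ModuleCat.{u} A)} {S E Q : ModuleCat.{u} A} {m : ℕ}
    (h : SES A S E Q) (hS : S ∈ addClosure A T) (hQ : Q ∈ bracket A T m) :
    E ∈ bracket A T (m + 1) := by
  match m with
  | 0 =>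
    obtain ⟨e⟩ := h.nonempty_linearEquiv_of_eq_zero hQ
    exact (isSummand_of_linearEquiv e.symm).mem_addClosure hS
  | _ + 1 => exact mem_addClosure_of_mem ⟨S, hS, Q, hQ, h⟩

theorem SES.mem_bracket_of_iterCosyzygy {T : Set (ModuleCat.{u} A)} {U V W S Q Z : ModuleCat.{u} A}
    {a m : ℕ} (h : SES A U V W) (hS : IsIterCosyzygyOf A a S V) (hST : S ∈ addClosure A T)
    (hQ : IsIterCosyzygyOf A (a + 1) Q U) (hQT : Q ∈ bracket A T m)
    (hZ : IsIterCosyzygyOf A a Z W) : Z ∈ bracket A T (m + 1) := by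
  obtain ⟨S', E, Q', P, J, hses, hS', ⟨e⟩, hP, -, hQ'⟩ := h.exists_iterCosyzygy_rotation a
  obtain ⟨eS⟩ := hS'.nonempty_linearEquiv hS (LinearEquiv.refl A V)
  obtain ⟨eQ⟩ := hQ'.nonempty_linearEquiv hQ (LinearEquiv.refl A U)
  obtain ⟨eZ⟩ := hZ.nonempty_linearEquiv hP (LinearEquiv.refl A W)
  have hE := hses.mem_bracket_succ ((isSummand_of_linearEquiv eS).mem_addClosure hST)
    ((isSummand_of_linearEquiv eQ).mem_bracket hQT)
  exact ((isSummand_of_linearEquiv eZ).trans (isSummand_of_linearEquiv_prod e)).mem_bracket hE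

end Bracket

theorem stmt2 (n : ℕ) (M : Fin (n + 1) → ModuleCat.{u} A) (X : ModuleCat.{u} A)
    (h : LongExact A n M X)
    (C : Fin (n + 1) → ModuleCat.{u} A)
    (hC : ∀ i : Fin (n + 1), IsIterCosyzygyOf A i (C i) (M i)) :
    X ∈ bracket A {ModuleCat.of A (∀ i, (C i : Type u))} (n + 1) := by
  obtain ⟨K, rfl, hK, hses⟩ := h
  set T : Set (ModuleCat.{u} A) := {ModuleCat.of A (∀ i, (C i : Type u))}
  have hCT : ∀ i, C i ∈ addClosure A T :=
    fun i => (isSummand_pi C i).mem_addClosure (mem_addClosure_of_mem rfl)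
  suffices ∀ i : Fin (n + 2), ∀ Z, IsIterCosyzygyOf A i Z (K i) → Z ∈ bracket A T (n + 1 - i) from
    this 0 (K 0) ⟨LinearEquiv.refl A _⟩
  refine Fin.reverseInduction (fun Z hZ => ?_) (fun i ih Z hZ => ?_)
  · rw [Fin.val_last, Nat.sub_self]
    exact hZ.eq_zero hK
  · obtain ⟨Q, hQ⟩ := exists_isIterCosyzygyOf (i + 1) (K i.succ)
    have hQT : Q ∈ bracket A T (n - i) := by simpa using ih Q (by simpa using hQ)
    rw [Fin.val_castSucc, show n + 1 - (i : ℕ) = n - i + 1 by omega]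
    exact (hses i).mem_bracket_of_iterCosyzygy (hC i) (hCT i) hQ hQT hZ

end Paper
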